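/- arXiv:hep-th/0610266 — 6 statements merged into one kernel-verified Lean document; each statement's English description precedes it below -/
import Mathlib

section
/- For vectors x₁,…,xₙ in ℝᵈ, the volume of the zonotope Z[X] = Σᵢ conv(0, xᵢ) (the Minkowski sum of the segments from 0 to xᵢ) equals the sum over all d-element index subsets 1 ≤ i₁ < … < i_d ≤ n of |det(x_{i₁},…,x_{i_d})|. -/
open MeasureTheory Finset

noncomputable section ZonoAux

def zonoSet {d n : ℕ} (x : Fin n → Fin d → ℝ) : Set (Fin d → ℝ) :=
  {y | ∃ lam : Fin n → ℝ, (∀ i, lam i ∈ Set.Icc (0:ℝ) 1) ∧ y = ∑ i, lam i • x i}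

def zonoMap {d n : ℕ} (x : Fin n → Fin d → ℝ) : (Fin n → ℝ) →ₗ[ℝ] (Fin d → ℝ) :=
  ∑ i, (LinearMap.proj i).smulRight (x i)

lemma zonoMap_apply {d n : ℕ} (x : Fin n → Fin d → ℝ) (lam : Fin n → ℝ) :
    zonoMap x lam = ∑ i, lam i • x i := by
  simp [zonoMap, LinearMap.sum_apply]

lemma zonoSet_eq_image {d n : ℕ} (x : Fin n → Fin d → ℝ) :
    zonoSet x = (zonoMap x) '' (Set.univ.pi fun _ : Fin n => Set.Icc (0:ℝ) 1) := by
  ext y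
  simp only [zonoSet, Set.mem_setOf_eq, Set.mem_image, Set.mem_pi, Set.mem_univ, forall_true_left]
  constructor
  · rintro ⟨lam, h1, h2⟩; exact ⟨lam, fun i => h1 i, by rw [zonoMap_apply]; exact h2.symm⟩
  · rintro ⟨lam, h1, h2⟩; exact ⟨lam, fun i => h1 i, by rw [← h2, zonoMap_apply]⟩

lemma zonoSet_convex {d n : ℕ} (x : Fin n → Fin d → ℝ) : Convex ℝ (zonoSet x) := by
  rw [zonoSet_eq_image]
  exact (convex_pi fun i _ => convex_Icc 0 1).linear_image (zonoMap x)

lemma zonoSet_compact {d n : ℕ} (x : Fin n → Fin d → ℝ) : IsCompact (zonoSet x) := by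
  rw [zonoSet_eq_image]
  exact (isCompact_univ_pi fun i => isCompact_Icc).image (zonoMap x).continuous_of_finiteDimensional

lemma zonoSet_nonempty {d n : ℕ} (x : Fin n → Fin d → ℝ) : (zonoSet x).Nonempty :=
  ⟨∑ i, (0:ℝ) • x i, 0, fun i => ⟨le_refl 0, zero_le_one⟩, rfl⟩

lemma zonoSet_measurableSet {d n : ℕ} (x : Fin n → Fin d → ℝ) : MeasurableSet (zonoSet x) :=
  (zonoSet_compact x).isClosed.measurableSet

def detAbs {d n : ℕ} (x : Fin n → Fin d → ℝ) (s : Finset (Fin n)) : ℝ :=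
  if h : s.card = d then |Matrix.det (Matrix.of fun i j => x (s.orderIsoOfFin h j) i)| else 0

lemma detAbs_nonneg {d n : ℕ} (x : Fin n → Fin d → ℝ) (s : Finset (Fin n)) : 0 ≤ detAbs x s := by
  unfold detAbs; split <;> positivity

def detSum (d n : ℕ) (x : Fin n → Fin d → ℝ) : ℝ :=
  ∑ s ∈ (Finset.univ : Finset (Fin n)).powersetCard d, detAbs x s

lemma detSum_nonneg (d n : ℕ) (x : Fin n → Fin d → ℝ) : 0 ≤ detSum d n x :=
  Finset.sum_nonneg fun s _ => detAbs_nonneg x s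

end ZonoAux

open MeasureTheory Finset

section Slice
variable {m : ℕ}

def eL (m : ℕ) : Fin (m+1) → ℝ := Pi.single (Fin.last m) 1

def insL (t : ℝ) (y : Fin m → ℝ) : Fin (m+1) → ℝ := Fin.insertNth (Fin.last m) t y

lemma insL_last (t : ℝ) (y : Fin m → ℝ) : insL t y (Fin.last m) = t :=
  Fin.insertNth_apply_same _ _ _

lemma insL_castSucc (t : ℝ) (y : Fin m → ℝ) (j : Fin m) :
    insL t y (Fin.castSucc j) = y j := by
  rw [insL, ← Fin.succAbove_last, Fin.insertNth_apply_succAbove]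

lemma eL_last : eL m (Fin.last m) = 1 := Pi.single_eq_same _ _

lemma eL_castSucc (j : Fin m) : eL m (Fin.castSucc j) = 0 :=
  Pi.single_eq_of_ne (Fin.castSucc_lt_last j).ne _

lemma insL_add_smul (t s : ℝ) (y : Fin m → ℝ) :
    insL (t - s) y + s • eL m = insL t y := by
  funext z
  induction z using Fin.lastCases with
  | last => simp [insL_last, eL_last]
  | cast j => simp [insL_castSucc, eL_castSucc]

lemma insL_combo {a b : ℝ} (hab : a + b = 1) (t₁ t₂ : ℝ) (y : Fin m → ℝ) :
    a • insL t₁ y + b • insL t₂ y = insL (a * t₁ + b * t₂) y := by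
  funext z
  induction z using Fin.lastCases with
  | last => simp [insL_last]
  | cast j =>
    simp only [Pi.add_apply, Pi.smul_apply, insL_castSucc, smul_eq_mul]
    rw [← add_mul, hab, one_mul]

lemma insL_self (z : Fin (m+1) → ℝ) :
    insL (z (Fin.last m)) (fun j => z (Fin.castSucc j)) = z := by
  funext w
  induction w using Fin.lastCases with
  | last => simp [insL_last]
  | cast j => simp [insL_castSucc]

lemma vol_eq_lintegral_fiber (S : Set (Fin (m+1) → ℝ)) (hS : MeasurableSet S) :
    volume S = ∫⁻ y : Fin m → ℝ, volume {t : ℝ | insL t y ∈ S} := by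
  set φ := MeasurableEquiv.piFinSuccAbove (fun _ : Fin (m+1) => ℝ) (Fin.last m) with hφ
  have mp := measurePreserving_piFinSuccAbove (fun _ : Fin (m+1) => (volume : Measure ℝ))
    (Fin.last m)
  have hsymm : ∀ (t : ℝ) (y : Fin m → ℝ), φ.symm (t, y) = insL t y := by
    intro t y
    simp [φ, MeasurableEquiv.piFinSuccAbove, insL, Fin.insertNthEquiv]
  have h1 : MeasurableSet (φ.symm ⁻¹' S) := φ.symm.measurable hS
  have h2 : φ ⁻¹' (φ.symm ⁻¹' S) = S := by
    ext z; simp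
  have h3 : (volume : Measure (Fin (m+1) → ℝ)) S
      = ((volume : Measure ℝ).prod (Measure.pi fun _ : Fin m => (volume : Measure ℝ)))
        (φ.symm ⁻¹' S) := by
    have := mp.measure_preimage h1.nullMeasurableSet
    rw [h2] at this
    rw [MeasureTheory.volume_pi]
    exact this
  rw [h3, Measure.prod_apply_symm h1, ← MeasureTheory.volume_pi]
  exact lintegral_congr fun y => congrArg volume (by
    ext t
    simp only [Set.mem_preimage, Set.mem_setOf_eq, hsymm t y])


lemma continuous_insL (y : Fin m → ℝ) : Continuous fun t : ℝ => insL t y := by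
  apply continuous_pi; intro z
  induction z using Fin.lastCases with
  | last => simpa only [insL_last] using continuous_id'
  | cast j => simpa only [insL_castSucc] using continuous_const

lemma fiber_convex {K : Set (Fin (m+1) → ℝ)} (hconv : Convex ℝ K) (y : Fin m → ℝ) :
    Convex ℝ {t : ℝ | insL t y ∈ K} := by
  intro t₁ h₁ t₂ h₂ a b ha hb hab
  have := hconv h₁ h₂ ha hb hab
  rw [insL_combo hab t₁ t₂ y] at this
  exact this

lemma fiber_compact {K : Set (Fin (m+1) → ℝ)} (hcomp : IsCompact K) (y : Fin m → ℝ) :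
    IsCompact {t : ℝ | insL t y ∈ K} := by
  obtain ⟨r, hr⟩ := hcomp.isBounded.subset_closedBall 0
  rw [Metric.isCompact_iff_isClosed_bounded]
  constructor
  · exact hcomp.isClosed.preimage (continuous_insL y)
  · apply Bornology.IsBounded.subset (Metric.isBounded_closedBall (x := (0:ℝ)) (r := r))
    intro t ht
    have h1 : insL t y ∈ Metric.closedBall 0 r := hr ht
    rw [Metric.mem_closedBall, dist_zero_right] at h1 ⊢
    calc ‖t‖ = ‖insL t y (Fin.last m)‖ := by rw [insL_last]
    _ ≤ ‖insL t y‖ := norm_le_pi_norm _ _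
    _ ≤ r := h1

lemma interval_of_convex_compact {F : Set ℝ} (hc : Convex ℝ F) (hk : IsCompact F)
    (hne : F.Nonempty) : F = Set.Icc (sInf F) (sSup F) := by
  apply subset_antisymm
  · intro t ht; exact ⟨csInf_le hk.bddBelow ht, le_csSup hk.bddAbove ht⟩
  · exact hc.ordConnected.out (hk.isClosed.csInf_mem hne hk.bddBelow)
      (hk.isClosed.csSup_mem hne hk.bddAbove)

lemma Icc_add_unit {a b : ℝ} (hab : a ≤ b) :
    {t : ℝ | ∃ s ∈ Set.Icc (0:ℝ) 1, t - s ∈ Set.Icc a b} = Set.Icc a (b+1) := by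
  ext t
  simp only [Set.mem_setOf_eq, Set.mem_Icc]
  constructor
  · rintro ⟨s, ⟨hs0, hs1⟩, h1, h2⟩; constructor <;> linarith
  · rintro ⟨h1, h2⟩
    rcases le_total t b with h | h
    · exact ⟨0, ⟨le_refl 0, zero_le_one⟩, by constructor <;> simp <;> linarith⟩
    · exact ⟨t - b, ⟨by linarith, by linarith⟩, by constructor <;> simp <;> linarith⟩

lemma slice_volume (K : Set (Fin (m+1) → ℝ)) (hconv : Convex ℝ K) (hcomp : IsCompact K) :
    volume {z | ∃ a ∈ K, ∃ t ∈ Set.Icc (0:ℝ) 1, z = a + t • eL m}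
      = volume K + volume ((fun y (j : Fin m) => y (Fin.castSucc j)) '' K) := by
  classical
  set π : (Fin (m+1) → ℝ) → (Fin m → ℝ) := fun y j => y (Fin.castSucc j) with hπ
  set Z := {z | ∃ a ∈ K, ∃ t ∈ Set.Icc (0:ℝ) 1, z = a + t • eL m} with hZdef
  have contπ : Continuous π := continuous_pi fun j => continuous_apply _
  have hZeq : Z = (fun p : (Fin (m+1) → ℝ) × ℝ => p.1 + p.2 • eL m) '' (K ×ˢ Set.Icc 0 1) := by
    ext z
    constructor
    · rintro ⟨a, ha, t, ht, rfl⟩; exact ⟨(a, t), ⟨ha, ht⟩, rfl⟩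
    · rintro ⟨⟨a, t⟩, ⟨ha, ht⟩, rfl⟩; exact ⟨a, ha, t, ht, rfl⟩
  have hZcomp : IsCompact Z := by
    rw [hZeq]
    exact (hcomp.prod isCompact_Icc).image (by fun_prop)
  have hZmeas : MeasurableSet Z := hZcomp.isClosed.measurableSet
  have hKmeas : MeasurableSet K := hcomp.isClosed.measurableSet
  have hPcomp : IsCompact (π '' K) := hcomp.image contπ
  have hPmeas : MeasurableSet (π '' K) := hPcomp.isClosed.measurableSet
  have hfibZ : ∀ (y : Fin m → ℝ) (t : ℝ),
      insL t y ∈ Z ↔ ∃ s ∈ Set.Icc (0:ℝ) 1, insL (t - s) y ∈ K := by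
    intro y t
    constructor
    · rintro ⟨a, ha, s, hs, hts⟩
      refine ⟨s, hs, ?_⟩
      have h2 : insL (t - s) y = a := add_right_cancel (b := s • eL m)
        (by rw [insL_add_smul t s y, hts])
      rwa [h2]
    · rintro ⟨s, hs, hK⟩
      exact ⟨insL (t-s) y, hK, s, hs, (insL_add_smul t s y).symm⟩
  rw [vol_eq_lintegral_fiber Z hZmeas, vol_eq_lintegral_fiber K hKmeas]
  have hpoint : ∀ y : Fin m → ℝ, volume {t : ℝ | insL t y ∈ Z}
      = volume {t : ℝ | insL t y ∈ K}
        + Set.indicator (π '' K) (fun _ => (1:ENNReal)) y := by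
    intro y
    by_cases hne : {t : ℝ | insL t y ∈ K}.Nonempty
    · set F := {t : ℝ | insL t y ∈ K} with hF
      have hyP : y ∈ π '' K := by
        obtain ⟨t, ht⟩ := hne
        exact ⟨insL t y, ht, funext fun j => insL_castSucc t y j⟩
      have hFc : Convex ℝ F := fiber_convex hconv y
      have hFk : IsCompact F := fiber_compact hcomp y
      have hFI : F = Set.Icc (sInf F) (sSup F) := interval_of_convex_compact hFc hFk hne
      have hab : sInf F ≤ sSup F := by
        obtain ⟨t, ht⟩ := hne
        exact le_trans (csInf_le hFk.bddBelow ht) (le_csSup hFk.bddAbove ht)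
      have hG : {t : ℝ | insL t y ∈ Z} = Set.Icc (sInf F) (sSup F + 1) := by
        rw [← Icc_add_unit hab]
        ext t
        rw [Set.mem_setOf_eq, hfibZ y t]
        constructor
        · rintro ⟨s, hs, hmem⟩
          have h' : t - s ∈ F := hmem
          rw [hFI] at h'
          exact ⟨s, hs, h'⟩
        · rintro ⟨s, hs, hmem⟩
          have h' : t - s ∈ F := by rw [hFI]; exact hmem
          exact ⟨s, hs, h'⟩
      rw [hG, show volume F = volume (Set.Icc (sInf F) (sSup F)) from congrArg _ hFI,
        Real.volume_Icc, Real.volume_Icc, Set.indicator_of_mem hyP,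
        show sSup F + 1 - sInf F = (sSup F - sInf F) + 1 by ring,
        ENNReal.ofReal_add (by linarith) zero_le_one, ENNReal.ofReal_one]
    · have hFe : {t : ℝ | insL t y ∈ K} = ∅ := Set.not_nonempty_iff_eq_empty.mp hne
      have hyP : y ∉ π '' K := by
        rintro ⟨z, hz, hzy⟩
        apply hne
        refine ⟨z (Fin.last m), ?_⟩
        have : insL (z (Fin.last m)) y = z := by
          rw [← hzy]; exact insL_self z
        rw [Set.mem_setOf_eq, this]; exact hz
      have hG : {t : ℝ | insL t y ∈ Z} = ∅ := by
        ext t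
        simp only [Set.mem_setOf_eq, Set.mem_empty_iff_false, iff_false]
        rw [hfibZ]
        rintro ⟨s, _, hmem⟩
        exact absurd hmem (by rw [Set.eq_empty_iff_forall_notMem] at hFe; exact hFe _)
      rw [hFe, hG, Set.indicator_of_notMem hyP]
      simp
  rw [lintegral_congr hpoint,
    lintegral_add_right _ (measurable_const.indicator hPmeas)]
  congr 1
  rw [lintegral_indicator hPmeas]
  simp

end Slice


open Finset

noncomputable section DetPart

variable {d n : ℕ}

lemma image_orderIsoOfFin {α : Type*} [LinearOrder α] (s : Finset α) {k : ℕ} (h : s.card = k) :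
    Finset.image (fun j => ((s.orderIsoOfFin h j : s) : α)) Finset.univ = s := by
  ext a
  simp only [Finset.mem_image, Finset.mem_univ, true_and]
  constructor
  · rintro ⟨j, rfl⟩; exact (s.orderIsoOfFin h j).2
  · intro ha; exact ⟨(s.orderIsoOfFin h).symm ⟨a, ha⟩, by simp⟩

lemma abs_det_submatrix_equiv {R : Type*} [CommRing R] [LinearOrder R] [IsStrictOrderedRing R]
    (M : Matrix (Fin d) (Fin d) R) (σ : Equiv.Perm (Fin d)) :
    |(M.submatrix id σ).det| = |M.det| := by
  rw [Matrix.det_permute' σ M, abs_mul]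
  rcases Int.units_eq_one_or (Equiv.Perm.sign σ) with h | h <;> simp [h]

lemma detAbs_image_inj (x : Fin n → Fin d → ℝ) (e : Fin d → Fin n)
    (he : Function.Injective e) :
    detAbs x (Finset.image e Finset.univ) = |Matrix.det (Matrix.of fun i j => x (e j) i)| := by
  classical
  set s := Finset.image e Finset.univ with hs
  have hcard : s.card = d := by
    rw [hs, Finset.card_image_of_injective _ he, Finset.card_univ, Fintype.card_fin]
  rw [detAbs, dif_pos hcard]
  set ι := s.orderIsoOfFin hcard with hι
  have hmem : ∀ j, e j ∈ s := fun j => Finset.mem_image.mpr ⟨j, Finset.mem_univ j, rfl⟩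
  have hinj : Function.Injective (fun j => (⟨e j, hmem j⟩ : s)) := by
    intro a b hab
    exact he (congrArg Subtype.val hab)
  have hbij : Function.Bijective (fun j => (⟨e j, hmem j⟩ : s)) := by
    have hcards : Fintype.card s = d := by rw [Fintype.card_coe, hcard]
    rw [Fintype.bijective_iff_injective_and_card]
    exact ⟨hinj, by rw [hcards, Fintype.card_fin]⟩
  set σ : Equiv.Perm (Fin d) := (Equiv.ofBijective _ hbij).trans ι.toEquiv.symm with hσ
  have hισ : ∀ j, (ι (σ j) : Fin n) = e j := by
    intro j
    simp [hσ, hι]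
  have hMeq : (Matrix.of fun i j => x (e j) i)
      = (Matrix.of fun i j => x (ι j) i).submatrix id σ := by
    ext i j
    simp [Matrix.submatrix_apply, hισ j]
  rw [hMeq, abs_det_submatrix_equiv]

lemma det_last_col_single (m : ℕ) (M : Matrix (Fin (m+1)) (Fin (m+1)) ℝ)
    (h : ∀ i, M i (Fin.last m) = (Pi.single (Fin.last m) (1:ℝ) : Fin (m+1) → ℝ) i) :
    M.det = (M.submatrix Fin.castSucc Fin.castSucc).det := by
  rw [Matrix.det_succ_column M (Fin.last m)]
  rw [Finset.sum_eq_single_of_mem (Fin.last m) (Finset.mem_univ _)]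
  · rw [h (Fin.last m), Pi.single_eq_same]
    have hsign : ((-1:ℝ)) ^ ((Fin.last m : ℕ) + (Fin.last m : ℕ)) = 1 :=
      Even.neg_one_pow ⟨m, rfl⟩
    rw [hsign, Fin.succAbove_last]
    ring
  · intro i _ hi
    rw [h i, Pi.single_eq_of_ne hi]
    ring


lemma detAbs_eq_zero_of_zero_mem (x : Fin n → Fin d → ℝ) (k : Fin n) (hk : x k = 0)
    (s : Finset (Fin n)) (hks : k ∈ s) : detAbs x s = 0 := by
  rw [detAbs]
  split
  · next h =>
    set ι := s.orderIsoOfFin h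
    obtain ⟨j₀, hj₀⟩ : ∃ j₀, (ι j₀ : Fin n) = k := ⟨ι.symm ⟨k, hks⟩, by simp⟩
    have : Matrix.det (Matrix.of fun i j => x (ι j) i) = 0 := by
      apply Matrix.det_eq_zero_of_column_eq_zero j₀
      intro i
      simp [hj₀, hk]
    rw [this, abs_zero]
  · rfl

lemma map_castSucc_card {t : Finset (Fin n)} :
    (t.map Fin.castSuccEmb).card = t.card := Finset.card_map _

lemma last_not_mem_map (t : Finset (Fin n)) :
    Fin.last n ∉ t.map Fin.castSuccEmb := by
  simp only [Finset.mem_map, not_exists]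
  rintro j ⟨hj, hj2⟩
  exact absurd hj2 (Fin.castSucc_lt_last j).ne

lemma map_castSucc_preimage {s : Finset (Fin (n+1))} (hs : Fin.last n ∉ s) :
    (s.preimage Fin.castSucc (Fin.castSucc_injective _).injOn).map Fin.castSuccEmb
      = s := by
  ext k
  simp only [Finset.mem_map, Finset.mem_preimage, Fin.castSuccEmb_apply]
  constructor
  · rintro ⟨j, hj, rfl⟩; exact hj
  · intro hk
    have hkl : k ≠ Fin.last n := fun h => hs (h ▸ hk)
    obtain ⟨j, rfl⟩ := Fin.exists_castSucc_eq.mpr hkl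
    exact ⟨j, hk, rfl⟩

lemma detAbs_map_castSucc (x : Fin (n+1) → Fin d → ℝ) {t : Finset (Fin n)}
    (ht : t.card = d) :
    detAbs x (t.map Fin.castSuccEmb) = detAbs (fun i => x (Fin.castSucc i)) t := by
  classical
  have h2 : detAbs (fun i => x (Fin.castSucc i)) t
      = |Matrix.det (Matrix.of fun i j => x (Fin.castSucc (t.orderIsoOfFin ht j)) i)| := by
    rw [detAbs, dif_pos ht]
  have himg : Finset.image (fun j => Fin.castSucc ((t.orderIsoOfFin ht j : Fin n)))
      Finset.univ = t.map Fin.castSuccEmb := by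
    ext k
    simp only [Finset.mem_image, Finset.mem_map, Finset.mem_univ, true_and,
      Fin.castSuccEmb_apply]
    constructor
    · rintro ⟨j, rfl⟩
      exact ⟨t.orderIsoOfFin ht j, (t.orderIsoOfFin ht j).2, rfl⟩
    · rintro ⟨a, ha, rfl⟩
      exact ⟨(t.orderIsoOfFin ht).symm ⟨a, ha⟩, by simp⟩
  have hinj : Function.Injective
      (fun j => Fin.castSucc ((t.orderIsoOfFin ht j : Fin n))) := by
    intro a b hab
    apply (t.orderIsoOfFin ht).injective
    exact Subtype.ext (Fin.castSucc_injective _ hab)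
  rw [← himg, detAbs_image_inj x _ hinj, h2]

lemma sum_not_last (x : Fin (n+1) → Fin d → ℝ) :
    ∑ s ∈ ((Finset.univ : Finset (Fin (n+1))).powersetCard d).filter
        (fun s => Fin.last n ∉ s), detAbs x s
    = detSum d n (fun i => x (Fin.castSucc i)) := by
  classical
  rw [detSum]
  symm
  apply Finset.sum_nbij' (i := fun t => t.map Fin.castSuccEmb)
    (j := fun s => s.preimage Fin.castSucc (Fin.castSucc_injective _).injOn)
  · intro t htm
    rw [Finset.mem_powersetCard] at htm
    rw [Finset.mem_filter, Finset.mem_powersetCard]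
    exact ⟨⟨Finset.subset_univ _, by rw [map_castSucc_card, htm.2]⟩, last_not_mem_map t⟩
  · intro s hsm
    rw [Finset.mem_filter, Finset.mem_powersetCard] at hsm
    rw [Finset.mem_powersetCard]
    refine ⟨Finset.subset_univ _, ?_⟩
    have := map_castSucc_preimage hsm.2
    have hc := congrArg Finset.card this
    rw [map_castSucc_card] at hc
    rw [hc, hsm.1.2]
  · intro t _
    apply Finset.map_injective Fin.castSuccEmb
    rw [map_castSucc_preimage (last_not_mem_map t)]
  · intro s hsm
    rw [Finset.mem_filter] at hsm
    exact map_castSucc_preimage hsm.2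
  · intro t htm
    rw [Finset.mem_powersetCard] at htm
    exact (detAbs_map_castSucc x htm.2).symm

lemma detAbs_insert_last {m : ℕ} (x : Fin (n+1) → Fin (m+1) → ℝ)
    (hx : x (Fin.last n) = (Pi.single (Fin.last m) (1:ℝ) : Fin (m+1) → ℝ))
    {t : Finset (Fin n)} (ht : t.card = m) :
    detAbs x (insert (Fin.last n) (t.map Fin.castSuccEmb))
      = detAbs (fun i j => x (Fin.castSucc i) (Fin.castSucc j)) t := by
  classical
  set ι := t.orderIsoOfFin ht with hι
  set e : Fin (m+1) → Fin (n+1) :=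
    Fin.snoc (fun j => Fin.castSucc ((ι j : Fin n))) (Fin.last n) with he
  have he_last : e (Fin.last m) = Fin.last n := Fin.snoc_last _ _
  have he_cast : ∀ j : Fin m, e (Fin.castSucc j) = Fin.castSucc ((ι j : Fin n)) :=
    fun j => Fin.snoc_castSucc _ _ j
  have hinj : Function.Injective e := by
    intro a b hab
    induction a using Fin.lastCases with
    | last =>
      induction b using Fin.lastCases with
      | last => rfl
      | cast b =>
        rw [he_last, he_cast] at hab
        exact absurd hab.symm (Fin.castSucc_lt_last _).ne
    | cast a =>
      induction b using Fin.lastCases with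
      | last =>
        rw [he_last, he_cast] at hab
        exact absurd hab (Fin.castSucc_lt_last _).ne
      | cast b =>
        rw [he_cast, he_cast] at hab
        congr 1
        exact ι.injective (Subtype.ext (Fin.castSucc_injective _ hab))
  have himg : Finset.image e Finset.univ = insert (Fin.last n) (t.map Fin.castSuccEmb) := by
    ext k
    simp only [Finset.mem_image, Finset.mem_univ, true_and, Finset.mem_insert,
      Finset.mem_map, Fin.castSuccEmb_apply]
    constructor
    · rintro ⟨j, rfl⟩
      induction j using Fin.lastCases with
      | last => left; exact he_last
      | cast j =>
        right
        exact ⟨(ι j : Fin n), (ι j).2, by rw [he_cast]⟩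
    · rintro (rfl | ⟨a, ha, rfl⟩)
      · exact ⟨Fin.last m, he_last⟩
      · refine ⟨Fin.castSucc (ι.symm ⟨a, ha⟩), ?_⟩
        rw [he_cast]
        simp
  rw [← himg, detAbs_image_inj x e hinj]
  have hcol : ∀ i, (Matrix.of fun i j => x (e j) i) i (Fin.last m)
      = (Pi.single (Fin.last m) (1:ℝ) : Fin (m+1) → ℝ) i := by
    intro i
    simp only [Matrix.of_apply, he_last, hx]
  rw [det_last_col_single m _ hcol, detAbs, dif_pos ht]
  congr 1
  congr 1
  ext i j
  simp only [Matrix.submatrix_apply, Matrix.of_apply, he_cast]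
  rfl

lemma sum_with_last {m : ℕ} (x : Fin (n+1) → Fin (m+1) → ℝ)
    (hx : x (Fin.last n) = (Pi.single (Fin.last m) (1:ℝ) : Fin (m+1) → ℝ)) :
    ∑ s ∈ ((Finset.univ : Finset (Fin (n+1))).powersetCard (m+1)).filter
        (fun s => Fin.last n ∈ s), detAbs x s
    = detSum m n (fun i j => x (Fin.castSucc i) (Fin.castSucc j)) := by
  classical
  rw [detSum]
  symm
  apply Finset.sum_nbij' (i := fun t => insert (Fin.last n) (t.map Fin.castSuccEmb))
    (j := fun s => (s.erase (Fin.last n)).preimage Fin.castSucc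
      (Fin.castSucc_injective _).injOn)
  · intro t htm
    rw [Finset.mem_powersetCard] at htm
    rw [Finset.mem_filter, Finset.mem_powersetCard]
    refine ⟨⟨Finset.subset_univ _, ?_⟩, Finset.mem_insert_self _ _⟩
    rw [Finset.card_insert_of_notMem (last_not_mem_map t), Finset.card_map, htm.2]
  · intro s hsm
    rw [Finset.mem_filter, Finset.mem_powersetCard] at hsm
    rw [Finset.mem_powersetCard]
    refine ⟨Finset.subset_univ _, ?_⟩
    have h1 : Fin.last n ∉ s.erase (Fin.last n) := Finset.notMem_erase _ _
    have := map_castSucc_preimage h1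
    have hc := congrArg Finset.card this
    rw [Finset.card_map] at hc
    rw [hc, Finset.card_erase_of_mem hsm.2, hsm.1.2]
    omega
  · intro t htm
    rw [Finset.mem_powersetCard] at htm
    apply Finset.map_injective Fin.castSuccEmb
    rw [map_castSucc_preimage (Finset.notMem_erase _ _),
      Finset.erase_insert (last_not_mem_map t)]
  · intro s hsm
    rw [Finset.mem_filter] at hsm
    rw [map_castSucc_preimage (Finset.notMem_erase _ _),
      Finset.insert_erase hsm.2]
  · intro t htm
    rw [Finset.mem_powersetCard] at htm
    exact (detAbs_insert_last x hx htm.2).symm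

lemma detAbs_linear (g : (Fin d → ℝ) ≃ₗ[ℝ] (Fin d → ℝ)) (x : Fin n → Fin d → ℝ)
    (s : Finset (Fin n)) :
    detAbs (fun i => g (x i)) s
      = |LinearMap.det (g : (Fin d → ℝ) →ₗ[ℝ] (Fin d → ℝ))| * detAbs x s := by
  classical
  rw [detAbs, detAbs]
  split
  · next h =>
    set ι := s.orderIsoOfFin h
    set Mg := LinearMap.toMatrix' (g : (Fin d → ℝ) →ₗ[ℝ] (Fin d → ℝ)) with hMg
    have hg : ∀ y : Fin d → ℝ, g y = Mg.mulVec y := by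
      intro y
      rw [hMg]
      rw [← Matrix.toLin'_apply, Matrix.toLin'_toMatrix']
      rfl
    have hMeq : (Matrix.of fun i j => g (x (ι j)) i)
        = Mg * (Matrix.of fun i j => x (ι j) i) := by
      ext i j
      rw [Matrix.mul_apply, Matrix.of_apply, hg]
      rfl
    rw [hMeq, Matrix.det_mul, abs_mul, hMg, LinearMap.det_toMatrix']
  · next h => ring

lemma detSum_linear (g : (Fin d → ℝ) ≃ₗ[ℝ] (Fin d → ℝ)) (x : Fin n → Fin d → ℝ) :
    detSum d n (fun i => g (x i))
      = |LinearMap.det (g : (Fin d → ℝ) →ₗ[ℝ] (Fin d → ℝ))| * detSum d n x := by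
  rw [detSum, detSum, Finset.mul_sum]
  exact Finset.sum_congr rfl fun s _ => detAbs_linear g x s

lemma exists_linearEquiv_apply_eq {V : Type*} [AddCommGroup V] [Module ℝ V]
    [FiniteDimensional ℝ V] {v w : V} (hv : v ≠ 0) (hw : w ≠ 0) :
    ∃ g : V ≃ₗ[ℝ] V, g v = w := by
  classical
  have hv' : LinearIndepOn ℝ id ({v} : Set V) :=
    linearIndependent_unique_iff.mpr (by simpa using hv)
  have hw' : LinearIndepOn ℝ id ({w} : Set V) :=
    linearIndependent_unique_iff.mpr (by simpa using hw)
  let B1 := Module.Basis.extend hv'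
  let B2 := Module.Basis.extend hw'
  haveI : Fintype (hv'.extend (Set.subset_univ _)) := FiniteDimensional.fintypeBasisIndex B1
  haveI : Fintype (hw'.extend (Set.subset_univ _)) := FiniteDimensional.fintypeBasisIndex B2
  have hvmem : v ∈ hv'.extend (Set.subset_univ _) :=
    hv'.subset_extend _ (Set.mem_singleton v)
  have hwmem : w ∈ hw'.extend (Set.subset_univ _) :=
    hw'.subset_extend _ (Set.mem_singleton w)
  have hcard : Fintype.card (hv'.extend (Set.subset_univ _))
      = Fintype.card (hw'.extend (Set.subset_univ _)) := by
    rw [← Module.finrank_eq_card_basis B1, ← Module.finrank_eq_card_basis B2]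
  let τ := Fintype.equivOfCardEq hcard
  let σ := τ.trans (Equiv.swap (τ ⟨v, hvmem⟩) ⟨w, hwmem⟩)
  refine ⟨B1.equiv B2 σ, ?_⟩
  have h1 : B1 ⟨v, hvmem⟩ = v := Module.Basis.extend_apply_self hv' ⟨v, hvmem⟩
  have h2 : B2 ⟨w, hwmem⟩ = w := Module.Basis.extend_apply_self hw' ⟨w, hwmem⟩
  calc (B1.equiv B2 σ) v = (B1.equiv B2 σ) (B1 ⟨v, hvmem⟩) := by rw [h1]
  _ = B2 (σ ⟨v, hvmem⟩) := B1.equiv_apply _ B2 σ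
  _ = B2 ⟨w, hwmem⟩ := by
      congr 1
      simp [σ]
  _ = w := h2

end DetPart
noncomputable section MainPart
open MeasureTheory Finset

lemma zono_d0 (n : ℕ) (x : Fin n → Fin 0 → ℝ) :
    volume (zonoSet x) = ENNReal.ofReal (detSum 0 n x) := by
  have h1 : zonoSet x = Set.univ :=
    Set.eq_univ_of_forall fun y =>
      ⟨0, fun i => ⟨le_rfl, zero_le_one⟩, Subsingleton.elim _ _⟩
  have h2 : (volume : Measure (Fin 0 → ℝ)) Set.univ = 1 := by
    rw [MeasureTheory.volume_pi, Measure.pi_univ]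
    simp
  have h3 : detSum 0 n x = 1 := by
    rw [detSum, Finset.powersetCard_zero, Finset.sum_singleton, detAbs,
      dif_pos Finset.card_empty]
    simp [Matrix.det_isEmpty]
  rw [h1, h2, h3, ENNReal.ofReal_one]

lemma zono_zero_vectors (d : ℕ) (x : Fin 0 → Fin (d+1) → ℝ) :
    volume (zonoSet x) = ENNReal.ofReal (detSum (d+1) 0 x) := by
  have h1 : zonoSet x = {0} := by
    ext y
    simp only [zonoSet, Set.mem_setOf_eq, Set.mem_singleton_iff]
    constructor
    · rintro ⟨lam, _, rfl⟩; simp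
    · rintro rfl; exact ⟨0, fun i => ⟨le_rfl, zero_le_one⟩, by simp⟩
  have h2 : ({0} : Set (Fin (d+1) → ℝ)) = Set.univ.pi fun _ => ({0} : Set ℝ) := by
    ext z
    simp [funext_iff]
  have h3 : (volume : Measure (Fin (d+1) → ℝ)) {0} = 0 := by
    rw [h2, MeasureTheory.volume_pi, Measure.pi_pi]
    simp
  have h4 : detSum (d+1) 0 x = 0 := by
    rw [detSum, Finset.powersetCard_eq_empty.mpr (by simp), Finset.sum_empty]
  rw [h1, h3, h4, ENNReal.ofReal_zero]

lemma zonoSet_decomp {n d : ℕ} (x : Fin (n+1) → Fin d → ℝ) :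
    zonoSet x = {z | ∃ a ∈ zonoSet (fun i => x (Fin.castSucc i)),
      ∃ t ∈ Set.Icc (0:ℝ) 1, z = a + t • x (Fin.last n)} := by
  ext z
  simp only [zonoSet, Set.mem_setOf_eq]
  constructor
  · rintro ⟨lam, hlam, rfl⟩
    refine ⟨∑ i : Fin n, lam (Fin.castSucc i) • x (Fin.castSucc i),
      ⟨fun i => lam (Fin.castSucc i), fun i => hlam _, rfl⟩,
      lam (Fin.last n), hlam _, ?_⟩
    rw [Fin.sum_univ_castSucc]
  · rintro ⟨a, ⟨lam', hlam', rfl⟩, t, ht, rfl⟩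
    refine ⟨Fin.snoc lam' t, ?_, ?_⟩
    · intro i
      induction i using Fin.lastCases with
      | last => rw [Fin.snoc_last]; exact ht
      | cast j => rw [Fin.snoc_castSucc]; exact hlam' j
    · rw [Fin.sum_univ_castSucc, Fin.snoc_last]
      congr 1
      exact Finset.sum_congr rfl fun j _ => by rw [Fin.snoc_castSucc]

lemma proj_zonoSet {n m : ℕ} (x' : Fin n → Fin (m+1) → ℝ) :
    (fun y (j : Fin m) => y (Fin.castSucc j)) '' zonoSet x'
      = zonoSet (fun i (j : Fin m) => x' i (Fin.castSucc j)) := by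
  ext y
  constructor
  · rintro ⟨z, ⟨lam, hlam, rfl⟩, rfl⟩
    refine ⟨lam, hlam, ?_⟩
    funext j
    simp only [Finset.sum_apply, Pi.smul_apply, smul_eq_mul]
  · rintro ⟨lam, hlam, rfl⟩
    refine ⟨∑ i, lam i • x' i, ⟨lam, hlam, rfl⟩, ?_⟩
    funext j
    simp only [Finset.sum_apply, Pi.smul_apply, smul_eq_mul]

lemma zono_vol : ∀ (n d : ℕ) (x : Fin n → Fin d → ℝ),
    volume (zonoSet x) = ENNReal.ofReal (detSum d n x) := by
  intro n
  induction n with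
  | zero =>
    intro d x
    cases d with
    | zero => exact zono_d0 0 x
    | succ d => exact zono_zero_vectors d x
  | succ n IH =>
    intro d x
    cases d with
    | zero => exact zono_d0 _ x
    | succ m =>
      -- Claim C : the result holds when the last vector is eL m
      have claimC : ∀ x : Fin (n+1) → Fin (m+1) → ℝ, x (Fin.last n) = eL m →
          volume (zonoSet x) = ENNReal.ofReal (detSum (m+1) (n+1) x) := by
        intro x hx
        have hZ : zonoSet x = {z | ∃ a ∈ zonoSet (fun i => x (Fin.castSucc i)),
            ∃ t ∈ Set.Icc (0:ℝ) 1, z = a + t • eL m} := by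
          rw [zonoSet_decomp x, hx]
        have hproj : (fun y (j : Fin m) => y (Fin.castSucc j))
              '' zonoSet (fun i => x (Fin.castSucc i))
            = zonoSet (fun i (j : Fin m) => x (Fin.castSucc i) (Fin.castSucc j)) :=
          proj_zonoSet _
        have hIH1 : volume (zonoSet (fun i => x (Fin.castSucc i)))
            = ENNReal.ofReal (detSum (m+1) n (fun i => x (Fin.castSucc i))) := IH (m+1) _
        have hIH2 : volume (zonoSet (fun i (j : Fin m) => x (Fin.castSucc i) (Fin.castSucc j)))
            = ENNReal.ofReal (detSum m n
              (fun i (j : Fin m) => x (Fin.castSucc i) (Fin.castSucc j))) := IH m _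
        have hsplit : detSum (m+1) (n+1) x
            = detSum (m+1) n (fun i => x (Fin.castSucc i))
              + detSum m n (fun i (j : Fin m) => x (Fin.castSucc i) (Fin.castSucc j)) := by
          rw [detSum, ← Finset.sum_filter_add_sum_filter_not
            ((Finset.univ : Finset (Fin (n+1))).powersetCard (m+1))
            (fun s => Fin.last n ∈ s), sum_with_last x hx, sum_not_last x]
          rw [detSum, detSum]
          ring
        rw [hZ, slice_volume _ (zonoSet_convex _) (zonoSet_compact _), hproj, hIH1, hIH2,
          ← ENNReal.ofReal_add (detSum_nonneg _ _ _) (detSum_nonneg _ _ _), hsplit]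
      by_cases hv : x (Fin.last n) = 0
      · set x' : Fin n → Fin (m+1) → ℝ := fun i => x (Fin.castSucc i) with hx'
        have hZ : zonoSet x = zonoSet x' := by
          rw [zonoSet_decomp x, hv]
          ext z
          simp only [Set.mem_setOf_eq, smul_zero, add_zero]
          constructor
          · rintro ⟨a, ha, t, ht, rfl⟩; exact ha
          · intro hz; exact ⟨z, hz, 0, ⟨le_rfl, zero_le_one⟩, rfl⟩
        rw [hZ, IH (m+1) x']
        congr 1
        rw [detSum, detSum, ← Finset.sum_filter_add_sum_filter_not
          ((Finset.univ : Finset (Fin (n+1))).powersetCard (m+1))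
          (fun s => Fin.last n ∈ s), sum_not_last x]
        have hzero : ∑ s ∈ ((Finset.univ : Finset (Fin (n+1))).powersetCard (m+1)).filter
            (fun s => Fin.last n ∈ s), detAbs x s = 0 := by
          apply Finset.sum_eq_zero
          intro s hs
          rw [Finset.mem_filter] at hs
          exact detAbs_eq_zero_of_zero_mem x (Fin.last n) hv s hs.2
        rw [hzero, zero_add]
        rfl
      · have heL : (eL m : Fin (m+1) → ℝ) ≠ 0 := by
          intro h
          have := congrFun h (Fin.last m)
          rw [eL_last] at this
          exact one_ne_zero this
        obtain ⟨g, hg⟩ := exists_linearEquiv_apply_eq hv heL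
        set y : Fin (n+1) → Fin (m+1) → ℝ := fun i => g (x i) with hy
        have hylast : y (Fin.last n) = eL m := hg
        have hC := claimC y hylast
        have himg : zonoSet y = ⇑(g : (Fin (m+1) → ℝ) →ₗ[ℝ] (Fin (m+1) → ℝ)) '' zonoSet x := by
          ext z
          simp only [zonoSet, Set.mem_setOf_eq, Set.mem_image]
          constructor
          · rintro ⟨lam, hlam, rfl⟩
            refine ⟨∑ i, lam i • x i, ⟨lam, hlam, rfl⟩, ?_⟩
            rw [map_sum]
            exact Finset.sum_congr rfl fun i _ => by rw [_root_.map_smul]; rfl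
          · rintro ⟨w, ⟨lam, hlam, rfl⟩, rfl⟩
            refine ⟨lam, hlam, ?_⟩
            rw [map_sum]
            exact Finset.sum_congr rfl fun i _ => by rw [_root_.map_smul]; rfl
        have hvol : volume (zonoSet y)
            = ENNReal.ofReal |LinearMap.det ((g : (Fin (m+1) → ℝ) →ₗ[ℝ] (Fin (m+1) → ℝ)))|
              * volume (zonoSet x) := by
          rw [himg]
          exact Measure.addHaar_image_linearMap volume _ _
        have hdet : detSum (m+1) (n+1) y
            = |LinearMap.det ((g : (Fin (m+1) → ℝ) →ₗ[ℝ] (Fin (m+1) → ℝ)))|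
              * detSum (m+1) (n+1) x := detSum_linear g x
        have habs : (0:ℝ) < |LinearMap.det ((g : (Fin (m+1) → ℝ) →ₗ[ℝ] (Fin (m+1) → ℝ)))| := by
          rw [abs_pos]
          exact (LinearEquiv.isUnit_det' g).ne_zero
        rw [hvol, hdet, ENNReal.ofReal_mul (le_of_lt habs)] at hC
        exact (ENNReal.mul_right_inj
          (ENNReal.ofReal_pos.mpr habs).ne' ENNReal.ofReal_ne_top).mp hC

end MainPart

open MeasureTheory

/-- The volume of the zonotope generated by segments from 0 to
`x i` in `ℝ^d` equals the sum over all `d`-element index subsets of the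
absolute value of the determinant of the corresponding columns. -/
theorem zonotope_volume (d n : ℕ) (x : Fin n → (Fin d → ℝ)) :
    (volume {y : Fin d → ℝ | ∃ lam : Fin n → ℝ,
        (∀ i, lam i ∈ Set.Icc (0 : ℝ) 1) ∧ y = ∑ i, lam i • x i}).toReal
      = ∑ s ∈ (Finset.univ.powersetCard d : Finset (Finset (Fin n))).attach,
          |Matrix.det (Matrix.of fun (i : Fin d) (j : Fin d) =>
            x ((s.1.orderIsoOfFin
              ((Finset.mem_powersetCard.mp s.2).2) j : Fin n)) i)| := by
  have hset : {y : Fin d → ℝ | ∃ lam : Fin n → ℝ,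
      (∀ i, lam i ∈ Set.Icc (0:ℝ) 1) ∧ y = ∑ i, lam i • x i} = zonoSet x := rfl
  rw [hset, zono_vol n d x, ENNReal.toReal_ofReal (detSum_nonneg d n x), detSum,
    ← Finset.sum_attach ((Finset.univ : Finset (Fin n)).powersetCard d) (detAbs x)]
  apply Finset.sum_congr rfl
  intro s _
  rw [detAbs, dif_pos (Finset.mem_powersetCard.mp s.2).2]
end

section
/- Let P be a convex polygon embedded at height one in ℝ³ with vertices v₁,…,vₙ (each of the form (*,*,1)) in counterclockwise order, and suppose n ≥ 3. For distinct φ, φ′ in the simplex Γₙ = {φ ∈ ℝ≥0ⁿ : Σφⁱ = r}, the zonotopes Z(φ) = Σᵢ φⁱ·conv(0,vᵢ) and Z(φ′) = Σᵢ φ′ⁱ·conv(0,vᵢ), assumed of nonzero volume, are not homothetic (i.e., there is no κ > 0 and t ∈ ℝ³ with Z(φ) = κ·Z(φ′) + t). -/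
open Pointwise MeasureTheory

/-- The determinant of the 3×3 matrix with columns `a`, `b`, `c`. -/
noncomputable def det3 (a b c : Fin 3 → ℝ) : ℝ :=
  Matrix.det (Matrix.of fun i j => ![a, b, c] j i)

/-!
The support function of a zonotope `∑ cᵢ • [0, vᵢ]` in a direction `ℓ` is `∑ max (cᵢ ℓ(vᵢ)) 0`,
and a homothety `Z = κ • Z' + {t}` turns it into `κ h' + ℓ(t)`. Adding the values at `ℓ` and `-ℓ`
removes the translation, leaving `∑ (φᵢ - κ φ'ᵢ) |ℓ(vᵢ)| = 0` for every `ℓ`. Distinct points at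
height one span distinct lines, so for each `j` some `ℓ` vanishes at `vⱼ` and at no other `vᵢ`;
then `s ↦ ∑ (φᵢ - κ φ'ᵢ) |ℓ(vᵢ) + s|` has a kink at `0` of size `φⱼ - κ φ'ⱼ`, which must vanish.
Hence `φ = κ φ'`, the equal sums force `κ = 1`, and `φ = φ'`.
-/

open Filter Topology

theorem IsGreatest.add {α : Type*} [Add α] [Preorder α] [AddLeftMono α] [AddRightMono α]
    {s t : Set α} {a b : α} (ha : IsGreatest s a) (hb : IsGreatest t b) :
    IsGreatest (s + t) (a + b) :=
  ⟨Set.add_mem_add ha.1 hb.1, by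
    rintro _ ⟨x, hx, y, hy, rfl⟩
    exact add_le_add (ha.2 hx) (hb.2 hy)⟩

theorem isGreatest_finsetSum {ι α : Type*} [AddCommMonoid α] [Preorder α] [AddLeftMono α]
    {s : ι → Set α} {a : ι → α} (m : Finset ι) (h : ∀ i ∈ m, IsGreatest (s i) (a i)) :
    IsGreatest (∑ i ∈ m, s i) (∑ i ∈ m, a i) := by
  induction m using Finset.cons_induction with
  | empty => simp [← Set.singleton_zero]
  | cons i m _ ih =>
    rw [Finset.sum_cons, Finset.sum_cons]
    exact (h i (Finset.mem_cons_self i m)).add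
      (ih fun k hk => h k (Finset.mem_cons_of_mem hk))

section Zonotope

variable {ι E : Type*} [Fintype ι] [AddCommGroup E] [Module ℝ E]

def zonotope (c : ι → ℝ) (v : ι → E) : Set E :=
  ∑ i, c i • segment ℝ 0 (v i)

theorem isGreatest_image_smul_segment_zero (ℓ : E →ₗ[ℝ] ℝ) (c : ℝ) (w : E) :
    IsGreatest (ℓ '' (c • segment ℝ 0 w)) (max (c * ℓ w) 0) := by
  have himage : ℓ '' (c • segment ℝ 0 w) = segment ℝ 0 (c * ℓ w) := by
    rw [← Set.image_smul, Set.image_image]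
    simpa using image_segment ℝ (c • ℓ).toAffineMap 0 w
  rw [himage, segment_eq_uIcc, Set.uIcc, max_comm (c * ℓ w)]
  exact isGreatest_Icc (inf_le_sup (a := (0 : ℝ)))

theorem isGreatest_image_zonotope (ℓ : E →ₗ[ℝ] ℝ) (c : ι → ℝ) (v : ι → E) :
    IsGreatest (ℓ '' zonotope c v) (∑ i, max (c i * ℓ (v i)) 0) := by
  rw [zonotope, Set.image_finsetSum]
  exact isGreatest_finsetSum _ fun i _ => isGreatest_image_smul_segment_zero ℓ (c i) (v i)

theorem IsGreatest.image_smul_add_singleton {S : Set E} {a κ : ℝ} {ℓ : E →ₗ[ℝ] ℝ}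
    (h : IsGreatest (ℓ '' S) a) (hκ : 0 ≤ κ) (t : E) :
    IsGreatest (ℓ '' (κ • S + {t})) (κ * a + ℓ t) := by
  have himage : ℓ '' (κ • S + {t}) = (fun y => κ * y + ℓ t) '' (ℓ '' S) := by
    rw [Set.add_singleton, ← Set.image_smul, Set.image_image, Set.image_image, Set.image_image]
    simp
  rw [himage]
  exact Monotone.map_isGreatest (fun y y' hy => by gcongr) h

theorem sum_abs_eq_of_zonotope_eq_smul_add {ι' : Type*} [Fintype ι'] {c : ι → ℝ} {v : ι → E}
    {d : ι' → ℝ} {w : ι' → E} {κ : ℝ} {t : E} (hκ : 0 ≤ κ)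
    (hZ : zonotope c v = κ • zonotope d w + {t}) (ℓ : E →ₗ[ℝ] ℝ) :
    ∑ i, |c i * ℓ (v i)| = κ * ∑ i, |d i * ℓ (w i)| := by
  have hsupport : ∀ ℓ : E →ₗ[ℝ] ℝ,
      ∑ i, max (c i * ℓ (v i)) 0 = κ * ∑ i, max (d i * ℓ (w i)) 0 + ℓ t := fun ℓ =>
    (isGreatest_image_zonotope ℓ c v).unique
      (hZ ▸ (isGreatest_image_zonotope ℓ d w).image_smul_add_singleton hκ t)
  have hpos := hsupport ℓ
  have hneg := hsupport (-ℓ)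
  simp only [LinearMap.neg_apply, mul_neg] at hneg
  simp only [← max_zero_add_max_neg_zero_eq_abs_self, Finset.sum_add_distrib, mul_add]
  linarith

end Zonotope

theorem abs_add_add_abs_sub_of_abs_le {α : Type*} [Field α] [LinearOrder α] [IsStrictOrderedRing α]
    {x y : α} (h : |y| ≤ |x|) : |x + y| + |x - y| = 2 * |x| := by
  obtain ⟨hy₁, hy₂⟩ := abs_le.mp h
  rcases le_total 0 x with hx | hx
  · rw [abs_of_nonneg hx] at hy₁ hy₂ ⊢
    rw [abs_of_nonneg (by linarith), abs_of_nonneg (by linarith)]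
    ring
  · rw [abs_of_nonpos hx] at hy₁ hy₂ ⊢
    rw [abs_of_nonpos (by linarith), abs_of_nonpos (by linarith)]
    ring

theorem exists_pos_forall_abs_mul_le {ι : Type*} [Finite ι] {x y : ι → ℝ} (hx : ∀ i, x i ≠ 0) :
    ∃ ε > 0, ∀ i, |ε * y i| ≤ |x i| := by
  have hsmall : ∀ᶠ s in 𝓝 (0 : ℝ), ∀ i, |s * y i| ≤ |x i| := by
    refine eventually_all.2 fun i => ?_
    have hlim : Tendsto (fun s : ℝ => |s * y i|) (𝓝 0) (𝓝 0) := by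
      simpa using ((continuous_id.mul continuous_const).abs).tendsto (0 : ℝ)
    exact hlim.eventually (ge_mem_nhds (abs_pos.2 (hx i)))
  obtain ⟨ε, hε, hεpos⟩ := ((hsmall.filter_mono nhdsWithin_le_nhds).and
    (self_mem_nhdsWithin (s := Set.Ioi (0 : ℝ)))).exists
  exact ⟨ε, hεpos, hε⟩

theorem eq_zero_of_forall_sum_mul_abs_add_mul_eq_zero {ι : Type*} [Fintype ι]
    {a x y : ι → ℝ} {j : ι} (hxj : x j = 0) (hyj : y j ≠ 0) (hx : ∀ i ≠ j, x i ≠ 0)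
    (h : ∀ s, ∑ i, a i * |x i + s * y i| = 0) : a j = 0 := by
  obtain ⟨ε, hε, hsmall⟩ := exists_pos_forall_abs_mul_le (x := fun i : {i // i ≠ j} => x i)
    (y := fun i => y i) fun i => hx i i.2
  -- the second difference at `s = 0`; the terms with `i ≠ j` are affine in `s` on `[-ε, ε]`
  have hsecond : ∑ i, a i * (|x i + ε * y i| + |x i - ε * y i| - 2 * |x i|) = 0 := by
    have hplus := h ε
    have hminus := h (-ε)
    have hzero := h 0
    simp only [zero_mul, add_zero, neg_mul, ← sub_eq_add_neg] at hminus hzero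
    simp only [mul_sub, mul_add, Finset.sum_sub_distrib, Finset.sum_add_distrib,
      mul_left_comm _ (2 : ℝ), ← Finset.mul_sum, hplus, hminus, hzero]
    ring
  rw [Finset.sum_eq_single j (fun i _ hij => by
    rw [abs_add_add_abs_sub_of_abs_le (hsmall ⟨i, hij⟩), sub_self, mul_zero])
    (fun hj => absurd (Finset.mem_univ j) hj), hxj] at hsecond
  have hpos : 0 < |ε * y j| + |-(ε * y j)| := by positivity
  simp only [zero_add, zero_sub, abs_zero, mul_zero, sub_zero] at hsecond
  exact (mul_eq_zero.1 hsecond).resolve_right hpos.ne'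

theorem det3_self_left (a c : Fin 3 → ℝ) : det3 a a c = 0 := by
  simp [det3, Matrix.det_fin_three]

theorem det3_self_right (a b : Fin 3 → ℝ) : det3 a b b = 0 := by
  simp [det3, Matrix.det_fin_three]

theorem det3_self_outer (a b : Fin 3 → ℝ) : det3 a b a = 0 := by
  simp [det3, Matrix.det_fin_three]

theorem injective_of_det3_pos {n : ℕ} (hn : 3 ≤ n) {v : Fin n → Fin 3 → ℝ}
    (hccw : ∀ i j k : Fin n, i < j → j < k → 0 < det3 (v i) (v j) (v k)) :
    Function.Injective v := by
  intro i j hij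
  by_contra hne
  wlog hlt : i < j generalizing i j
  · exact this hij.symm (Ne.symm hne) ((not_lt.1 hlt).lt_of_ne (Ne.symm hne))
  obtain ⟨k, hki, hkj⟩ := Finset.exists_mem_ne (s := Finset.univ.erase i) (by simp; omega) j
  replace hki := Finset.ne_of_mem_erase hki
  rcases hki.lt_or_gt with hk | hk
  · simpa [hij, det3_self_right] using hccw k i j hk hlt
  rcases hkj.lt_or_gt with hk' | hk'
  · simpa [hij, det3_self_outer] using hccw i k j hk hk'
  · simpa [hij, det3_self_left] using hccw i j k hlt hk'

theorem notMem_span_singleton_of_ne_of_apply_eq_one {K E : Type*} [Field K] [AddCommGroup E]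
    [Module K E] (p : E →ₗ[K] K) {x y : E} (hx : p x = 1) (hy : p y = 1) (hxy : x ≠ y) :
    x ∉ K ∙ y := by
  intro hmem
  obtain ⟨c, rfl⟩ := Submodule.mem_span_singleton.1 hmem
  have hc : c = 1 := by simpa [hy] using hx
  exact hxy (by rw [hc, one_smul])

theorem exists_dual_apply_eq_zero_and_apply_ne_zero {ι K E : Type*} [Finite ι] [Field K]
    [Infinite K] [AddCommGroup E] [Module K E] (v : ι → E) (j : ι)
    (hv : ∀ i ≠ j, v i ∉ K ∙ v j) :
    ∃ ℓ : Module.Dual K E, ℓ (v j) = 0 ∧ ∀ i ≠ j, ℓ (v i) ≠ 0 := by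
  obtain ⟨f, hf⟩ := Module.exists_dual_forall_apply_ne_zero (K := K)
    (fun i : {i // i ≠ j} => (K ∙ v j).mkQ (v i))
    fun i => by simpa [Submodule.Quotient.mk_eq_zero] using hv i i.2
  refine ⟨f ∘ₗ (K ∙ v j).mkQ, ?_, fun i hi => hf ⟨i, hi⟩⟩
  simp [(Submodule.Quotient.mk_eq_zero _).2 (Submodule.mem_span_singleton_self (v j))]

theorem zonotopes_not_homothetic_general (n : ℕ) (hn : 3 ≤ n)
    (v : Fin n → (Fin 3 → ℝ)) (hheight : ∀ i, v i 2 = 1)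
    (hccw : ∀ i j k : Fin n, i < j → j < k → 0 < det3 (v i) (v j) (v k))
    (r : ℝ) (hr : 0 < r) (φ φ' : Fin n → ℝ)
    (hφ : ∀ i, 0 ≤ φ i) (hφ' : ∀ i, 0 ≤ φ' i)
    (hsum : ∑ i, φ i = r) (hsum' : ∑ i, φ' i = r) (hne : φ ≠ φ') :
    ¬ ∃ (κ : ℝ) (t : Fin 3 → ℝ), 0 < κ ∧
        (∑ i, φ i • segment ℝ (0 : Fin 3 → ℝ) (v i))
          = κ • (∑ i, φ' i • segment ℝ (0 : Fin 3 → ℝ) (v i)) + {t} := by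
  rintro ⟨κ, t, hκ, hZ⟩
  have hinj := injective_of_det3_pos hn hccw
  have hprop : ∀ j, φ j = κ * φ' j := by
    intro j
    obtain ⟨ℓ, hℓj, hℓ⟩ := exists_dual_apply_eq_zero_and_apply_ne_zero v j fun i hi =>
      notMem_span_singleton_of_ne_of_apply_eq_one (LinearMap.proj 2) (hheight i) (hheight j)
        (hinj.ne hi)
    refine sub_eq_zero.1 (eq_zero_of_forall_sum_mul_abs_add_mul_eq_zero
      (a := fun i => φ i - κ * φ' i) (x := fun i => ℓ (v i))
      (y := fun i => v i 2) hℓj (by simp [hheight]) hℓ fun s => ?_)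
    have := sum_abs_eq_of_zonotope_eq_smul_add hκ.le hZ (ℓ + s • LinearMap.proj 2)
    simp only [LinearMap.add_apply, LinearMap.smul_apply, LinearMap.coe_proj,
      Function.eval, smul_eq_mul, abs_mul, abs_of_nonneg (hφ _), abs_of_nonneg (hφ' _)] at this
    simp only [sub_mul, Finset.sum_sub_distrib, mul_assoc, ← Finset.mul_sum, this, sub_self]
  have hκ1 : κ = 1 := by
    have hr' : κ * r = r :=
      calc κ * r = ∑ i, κ * φ' i := by rw [← hsum', Finset.mul_sum]
        _ = r := by simp_rw [← hprop, hsum]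
    exact (mul_eq_right₀ hr.ne').1 hr'
  exact hne (funext fun i => by rw [hprop i, hκ1, one_mul])

/-- For a convex polygon at height one with vertices `v₁,…,vₙ`
(counterclockwise), and distinct points `φ ≠ φ'` of the simplex
`Γₙ = {φ ∈ ℝ≥0ⁿ : Σφⁱ = r}`, the zonotopes `Z(φ)` and `Z(φ')`, assumed of
nonzero volume, are not homothetic. -/
theorem zonotopes_not_homothetic (n : ℕ) (hn : 3 ≤ n)
    (v : Fin n → (Fin 3 → ℝ)) (hheight : ∀ i, v i 2 = 1)
    (hccw : ∀ i j k : Fin n, i < j → j < k → 0 < det3 (v i) (v j) (v k))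
    (r : ℝ) (hr : 0 < r) (φ φ' : Fin n → ℝ)
    (hφ : ∀ i, 0 ≤ φ i) (hφ' : ∀ i, 0 ≤ φ' i)
    (hsum : ∑ i, φ i = r) (hsum' : ∑ i, φ' i = r) (hne : φ ≠ φ')
    (hvol : volume (∑ i, φ i • segment ℝ (0 : Fin 3 → ℝ) (v i)) ≠ 0)
    (hvol' : volume (∑ i, φ' i • segment ℝ (0 : Fin 3 → ℝ) (v i)) ≠ 0) :
    ¬ ∃ (κ : ℝ) (t : Fin 3 → ℝ), 0 < κ ∧
        (∑ i, φ i • segment ℝ (0 : Fin 3 → ℝ) (v i))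
          = κ • (∑ i, φ' i • segment ℝ (0 : Fin 3 → ℝ) (v i)) + {t} :=
  zonotopes_not_homothetic_general n hn v hheight hccw r hr φ φ' hφ hφ' hsum hsum' hne
end

section
/- Let v₁,…,vₙ (n ≥ 3) be the vertices, in counterclockwise order at height one, of a convex polygon P in ℝ³, and let φ* ∈ relint(Γₙ) be the critical point of F_P(φ) = Σ_{i<j<k} det(vᵢ,vⱼ,v_k) φⁱφʲφᵏ on Γₙ = {φ ∈ ℝ≥0ⁿ : Σφⁱ = r}. Then φ*ˢ = (r/3) · (Σ_{{i,j,k} ∋ s} c_{ijk} φ*ⁱφ*ʲφ*ᵏ) / F_P(φ*) for each s, where c_{ijk} = det(vᵢ,vⱼ,v_k); in particular 0 < φ*ˢ ≤ r/3 for all s. -/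
open Finset

section CubicForm

variable {n : ℕ} (c : Fin n → Fin n → Fin n → ℝ) (φ : Fin n → ℝ)

noncomputable def cubicForm : ℝ :=
  ∑ i, ∑ j ∈ Ioi i, ∑ k ∈ Ioi j, c i j k * φ i * φ j * φ k

noncomputable def cubicFormThrough (s : Fin n) : ℝ :=
  ∑ i, ∑ j ∈ Ioi i, ∑ k ∈ Ioi j,
    if s = i ∨ s = j ∨ s = k then c i j k * φ i * φ j * φ k else 0

theorem hasFDerivAt_cubicForm :
    HasFDerivAt (cubicForm c)
      (∑ i, ∑ j ∈ Ioi i, ∑ k ∈ Ioi j, c i j k •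
        ((φ j * φ k) • ContinuousLinearMap.proj i + (φ i * φ k) • ContinuousLinearMap.proj j
          + (φ i * φ j) • ContinuousLinearMap.proj k) : (Fin n → ℝ) →L[ℝ] ℝ) φ := by
  unfold cubicForm
  refine HasFDerivAt.fun_sum fun i _ => HasFDerivAt.fun_sum fun j _ =>
    HasFDerivAt.fun_sum fun k _ => ?_
  have hproj (a : Fin n) := hasFDerivAt_apply (𝕜 := ℝ) a φ
  refine ((((hproj i).const_mul (c i j k)).fun_mul (hproj j)).fun_mul (hproj k)).congr_fderiv ?_
  ext e
  simp only [_root_.add_apply, _root_.smul_apply, ContinuousLinearMap.proj_apply, smul_eq_mul]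
  ring

theorem mul_fderiv_cubicForm_single (s : Fin n) :
    φ s * fderiv ℝ (cubicForm c) φ (Pi.single s 1) = cubicFormThrough c φ s := by
  simp only [(hasFDerivAt_cubicForm c φ).fderiv, _root_.sum_apply, _root_.add_apply,
    _root_.smul_apply, ContinuousLinearMap.proj_apply, smul_eq_mul, mul_sum, cubicFormThrough]
  refine sum_congr rfl fun i _ => sum_congr rfl fun j hj => sum_congr rfl fun k hk => ?_
  have hij := (mem_Ioi.mp hj).ne'
  have hjk := (mem_Ioi.mp hk).ne'
  have hik := ((mem_Ioi.mp hj).trans (mem_Ioi.mp hk)).ne'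
  by_cases hsi : s = i <;> by_cases hsj : s = j <;> by_cases hsk : s = k <;>
    simp_all <;> ring

theorem sum_ite_or_three {M : Type*} [AddCommMonoid M] {i j k : Fin n}
    (hij : i ≠ j) (hik : i ≠ k) (hjk : j ≠ k) (t : M) :
    ∑ s, (if s = i ∨ s = j ∨ s = k then t else 0) = 3 • t := by
  have h s : (s = i ∨ s = j ∨ s = k) ↔ s ∈ ({i, j, k} : Finset (Fin n)) := by simp
  simp only [h, sum_ite_mem, univ_inter, sum_const]
  rw [card_eq_three.mpr ⟨i, j, k, hij, hik, hjk, rfl⟩]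

theorem sum_cubicFormThrough : ∑ s, cubicFormThrough c φ s = 3 * cubicForm c φ := by
  simp only [cubicFormThrough, cubicForm]
  rw [sum_comm, mul_sum]
  refine sum_congr rfl fun i _ => ?_
  rw [sum_comm, mul_sum]
  refine sum_congr rfl fun j hj => ?_
  rw [sum_comm, mul_sum]
  refine sum_congr rfl fun k hk => ?_
  have hij := mem_Ioi.mp hj
  have hjk := mem_Ioi.mp hk
  rw [sum_ite_or_three hij.ne (hij.trans hjk).ne hjk.ne, nsmul_eq_mul, Nat.cast_ofNat]

theorem mul_three_cubicForm_of_fderiv_single_eq {lam : ℝ}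
    (hcrit : ∀ s, fderiv ℝ (cubicForm c) φ (Pi.single s 1) = lam) (s : Fin n) :
    φ s * (3 * cubicForm c φ) = (∑ i, φ i) * cubicFormThrough c φ s := by
  have hthrough t : φ t * lam = cubicFormThrough c φ t :=
    hcrit t ▸ mul_fderiv_cubicForm_single c φ t
  have heuler : (∑ i, φ i) * lam = 3 * cubicForm c φ := by
    rw [← sum_cubicFormThrough, sum_mul]
    exact sum_congr rfl fun t _ => hthrough t
  rw [← heuler, ← hthrough s]
  ring

variable {c φ}

theorem cubicFormThrough_le_cubicForm
    (hterm : ∀ i j k, i < j → j < k → 0 ≤ c i j k * φ i * φ j * φ k) (s : Fin n) :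
    cubicFormThrough c φ s ≤ cubicForm c φ := by
  refine sum_le_sum fun i _ => sum_le_sum fun j hj => sum_le_sum fun k hk => ?_
  split_ifs
  · exact le_rfl
  · exact hterm i j k (mem_Ioi.mp hj) (mem_Ioi.mp hk)

theorem cubicForm_pos (hn : 3 ≤ n)
    (hterm : ∀ i j k, i < j → j < k → 0 < c i j k * φ i * φ j * φ k) :
    0 < cubicForm c φ := by
  have hterm' {i j k} (hj : j ∈ Ioi i) (hk : k ∈ Ioi j) :=
    hterm i j k (mem_Ioi.mp hj) (mem_Ioi.mp hk)
  have h01 : (⟨1, by omega⟩ : Fin n) ∈ Ioi ⟨0, by omega⟩ := by simp [Fin.lt_def]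
  have h12 : (⟨2, by omega⟩ : Fin n) ∈ Ioi ⟨1, by omega⟩ := by simp [Fin.lt_def]
  refine sum_pos' (fun _ _ => sum_nonneg fun _ hj => sum_nonneg fun _ hk => (hterm' hj hk).le)
    ⟨⟨0, by omega⟩, mem_univ _, ?_⟩
  refine sum_pos' (fun _ hj => sum_nonneg fun _ hk => (hterm' hj hk).le) ⟨_, h01, ?_⟩
  exact sum_pos' (fun _ hk => (hterm' h01 hk).le) ⟨_, h12, hterm' h01 h12⟩

theorem coord_eq_and_le_of_fderiv_single_eq (hn : 3 ≤ n)
    (hc : ∀ i j k, i < j → j < k → 0 < c i j k) (hφ : ∀ i, 0 < φ i) {lam : ℝ}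
    (hcrit : ∀ s, fderiv ℝ (cubicForm c) φ (Pi.single s 1) = lam) (s : Fin n) :
    φ s = (∑ i, φ i) / 3 * cubicFormThrough c φ s / cubicForm c φ ∧
      φ s ≤ (∑ i, φ i) / 3 := by
  have hterm i j k (hij : i < j) (hjk : j < k) : 0 < c i j k * φ i * φ j * φ k := by
    have := hc i j k hij hjk
    have := hφ i
    have := hφ j
    have := hφ k
    positivity
  have hF := cubicForm_pos hn hterm
  have hle := cubicFormThrough_le_cubicForm (fun i j k hij hjk => (hterm i j k hij hjk).le) s
  have hsum : 0 ≤ ∑ i, φ i := sum_nonneg fun i _ => (hφ i).le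
  have key := mul_three_cubicForm_of_fderiv_single_eq c φ hcrit s
  constructor
  · field_simp
    linarith
  · nlinarith

end CubicForm

theorem critical_point_bound_general (n : ℕ) (hn : 3 ≤ n)
    (v : Fin n → (Fin 3 → ℝ))
    (hccw : ∀ i j k : Fin n, i < j → j < k → 0 < det3 (v i) (v j) (v k))
    (r : ℝ)
    (F : (Fin n → ℝ) → ℝ)
    (hF : F = fun φ => ∑ i, ∑ j ∈ Finset.Ioi i, ∑ k ∈ Finset.Ioi j,
      det3 (v i) (v j) (v k) * φ i * φ j * φ k)
    (φs : Fin n → ℝ) (hpos : ∀ i, 0 < φs i) (hsum : ∑ i, φs i = r)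
    (hcrit : ∃ lam : ℝ, ∀ s, fderiv ℝ F φs (Pi.single s 1) = lam) :
    ∀ s : Fin n,
      φs s = (r / 3) *
        (∑ i, ∑ j ∈ Finset.Ioi i, ∑ k ∈ Finset.Ioi j,
          if s = i ∨ s = j ∨ s = k then
            det3 (v i) (v j) (v k) * φs i * φs j * φs k else 0) / F φs
      ∧ 0 < φs s ∧ φs s ≤ r / 3 := by
  obtain ⟨lam, hlam⟩ := hcrit
  replace hF : F = cubicForm fun i j k => det3 (v i) (v j) (v k) := hF
  subst hF hsum
  intro s
  obtain ⟨heq, hle⟩ := coord_eq_and_le_of_fderiv_single_eq hn hccw hpos hlam s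
  exact ⟨heq, hpos s, hle⟩

/-- At the critical point `φ*` of `F_P` on the simplex `Γₙ`,
each coordinate satisfies
`φ*ˢ = (r/3)·(Σ_{triples containing s} c_{ijk} φ*ⁱφ*ʲφ*ᵏ)/F_P(φ*)`,
and in particular `0 < φ*ˢ ≤ r/3`. -/
theorem critical_point_bound (n : ℕ) (hn : 3 ≤ n)
    (v : Fin n → (Fin 3 → ℝ)) (hheight : ∀ i, v i 2 = 1)
    (hccw : ∀ i j k : Fin n, i < j → j < k → 0 < det3 (v i) (v j) (v k))
    (r : ℝ) (hr : 0 < r)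
    (F : (Fin n → ℝ) → ℝ)
    (hF : F = fun φ => ∑ i, ∑ j ∈ Finset.Ioi i, ∑ k ∈ Finset.Ioi j,
      det3 (v i) (v j) (v k) * φ i * φ j * φ k)
    (φs : Fin n → ℝ) (hpos : ∀ i, 0 < φs i) (hsum : ∑ i, φs i = r)
    (hcrit : ∃ lam : ℝ, ∀ s, fderiv ℝ F φs (Pi.single s 1) = lam) :
    ∀ s : Fin n,
      φs s = (r / 3) *
        (∑ i, ∑ j ∈ Finset.Ioi i, ∑ k ∈ Finset.Ioi j,
          if s = i ∨ s = j ∨ s = k then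
            det3 (v i) (v j) (v k) * φs i * φs j * φs k else 0) / F φs
      ∧ 0 < φs s ∧ φs s ≤ r / 3 :=
  critical_point_bound_general n hn v hccw r F hF φs hpos hsum hcrit
end

section
/- Let φ¹,…,φ^{n−1} be positive reals and (x₁,y₁),…,(x_{n−1},y_{n−1}) points in ℝ≥0² with xᵢyⱼ − xⱼyᵢ > 0 for all 1 ≤ i < j ≤ n−1. Then at least one of the two inequalities holds: Σ_{1≤i<j≤n−1} φⁱφʲ(xᵢ − xⱼ) > 0, or Σ_{1≤i<j≤n−1} φⁱφʲ(yⱼ − yᵢ) > 0. -/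
/-!
Writing `c i = ∑_{j > i} φ j - ∑_{j < i} φ j`, the two sums are `∑ φ i c i x i` and
`-∑ φ i c i y i`, and `c` is antitone, positive at the first index and negative at the last.
So the weights `w i = φ i c i` are positive on an initial segment and nonpositive afterwards.
Split `∑ w i (x i, y i) = U - W` with `U = ∑ w⁺ (x, y)` and `W = ∑ w⁻ (x, y)`, both in the
closed first quadrant. Every index with `w > 0` precedes every index with `w < 0`, so by the
increasing polar angle the cross product `U × W` is positive; but if both sums failed to be
positive, `U` would lie weakly left of and above `W`, forcing `U × W ≤ 0`.
-/

open Finset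

section Balance

variable {ι : Type*} [LinearOrder ι] [LocallyFiniteOrderTop ι] [LocallyFiniteOrderBot ι]

def balance (a : ι → ℝ) (i : ι) : ℝ := ∑ j ∈ Ioi i, a j - ∑ j ∈ Iio i, a j

theorem sum_sum_Ioi_mul_sub [Fintype ι] (a f : ι → ℝ) :
    ∑ i, ∑ j ∈ Ioi i, a i * a j * (f i - f j) = ∑ i, a i * balance a i * f i := by
  have hswap : ∑ i, ∑ j ∈ Ioi i, a i * a j * f j = ∑ j, ∑ i ∈ Iio j, a i * a j * f j :=
    sum_comm' fun _ _ => by simp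
  simp only [mul_sub, sum_sub_distrib]
  rw [hswap, ← sum_sub_distrib]
  refine sum_congr rfl fun i _ => ?_
  rw [balance, mul_sub, sub_mul, mul_sum, mul_sum, sum_mul, sum_mul]
  congr 1
  exact sum_congr rfl fun j _ => by ring

variable {a : ι → ℝ}

theorem balance_antitone (ha : ∀ i, 0 ≤ a i) : Antitone (balance a) := fun _ _ hij =>
  sub_le_sub (sum_le_sum_of_subset_of_nonneg (Ioi_subset_Ioi hij) fun k _ _ => ha k)
    (sum_le_sum_of_subset_of_nonneg (Iio_subset_Iio hij) fun k _ _ => ha k)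

theorem balance_pos_of_isMin (ha : ∀ i, 0 < a i) {i j : ι} (hi : IsMin i) (hij : i < j) :
    0 < balance a i := by
  rw [balance, Iio_eq_empty.mpr hi, sum_empty, sub_zero]
  exact sum_pos (fun k _ => ha k) ⟨j, mem_Ioi.mpr hij⟩

theorem balance_neg_of_isMax (ha : ∀ i, 0 < a i) {i j : ι} (hj : IsMax j) (hij : i < j) :
    balance a j < 0 := by
  rw [balance, Ioi_eq_empty.mpr hj, sum_empty, zero_sub, neg_neg_iff_pos]
  exact sum_pos (fun k _ => ha k) ⟨i, mem_Iio.mpr hij⟩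

end Balance

section Cross

variable {ι : Type*} [Fintype ι]

theorem sum_mul_sum_sub_sum_mul_sum (p q x y : ι → ℝ) :
    (∑ i, p i * x i) * (∑ j, q j * y j) - (∑ i, p i * y i) * (∑ j, q j * x j) =
      ∑ i, ∑ j, p i * q j * (x i * y j - x j * y i) := by
  simp only [sum_mul_sum, ← sum_sub_distrib]
  exact sum_congr rfl fun i _ => sum_congr rfl fun j _ => by ring

theorem zero_lt_sum_mul_or_sum_mul_neg {w x y : ι → ℝ} (hx : ∀ i, 0 ≤ x i) (hy : ∀ i, 0 ≤ y i)
    (hcross : ∀ i j, 0 < w i → w j < 0 → 0 < x i * y j - x j * y i)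
    {i₀ j₀ : ι} (hi₀ : 0 < w i₀) (hj₀ : w j₀ < 0) :
    0 < ∑ i, w i * x i ∨ ∑ i, w i * y i < 0 := by
  set Ux := ∑ i, (w i)⁺ * x i
  set Uy := ∑ i, (w i)⁺ * y i
  set Wx := ∑ i, (w i)⁻ * x i
  set Wy := ∑ i, (w i)⁻ * y i
  have hsplit : ∀ f : ι → ℝ, ∑ i, w i * f i = ∑ i, (w i)⁺ * f i - ∑ i, (w i)⁻ * f i := by
    intro f
    simp only [← sum_sub_distrib, ← sub_mul, posPart_sub_negPart]
  have hUx : 0 ≤ Ux := sum_nonneg fun i _ => mul_nonneg (posPart_nonneg _) (hx i)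
  have hWy : 0 ≤ Wy := sum_nonneg fun i _ => mul_nonneg (negPart_nonneg _) (hy i)
  have hterm : ∀ i j, 0 ≤ (w i)⁺ * (w j)⁻ * (x i * y j - x j * y i) := by
    intro i j
    rcases le_or_gt (w i) 0 with hi | hi
    · simp [posPart_eq_zero.mpr hi]
    rcases le_or_gt 0 (w j) with hj | hj
    · simp [negPart_eq_zero.mpr hj]
    exact (mul_pos (mul_pos (posPart_pos hi) (negPart_pos hj)) (hcross i j hi hj)).le
  have hcross_pos : 0 < Ux * Wy - Uy * Wx := by
    rw [sum_mul_sum_sub_sum_mul_sum]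
    refine sum_pos' (fun i _ => sum_nonneg fun j _ => hterm i j) ⟨i₀, mem_univ _, ?_⟩
    refine sum_pos' (fun j _ => hterm i₀ j) ⟨j₀, mem_univ _, ?_⟩
    exact mul_pos (mul_pos (posPart_pos hi₀) (negPart_pos hj₀)) (hcross i₀ j₀ hi₀ hj₀)
  by_contra! h
  rw [hsplit, hsplit, sub_nonpos, sub_nonneg] at h
  obtain ⟨hxle, hyle⟩ := h
  have hcross_le : Ux * Wy ≤ Uy * Wx :=
    calc Ux * Wy ≤ Wx * Wy := mul_le_mul_of_nonneg_right hxle hWy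
      _ ≤ Wx * Uy := mul_le_mul_of_nonneg_left hyle (hUx.trans hxle)
      _ = Uy * Wx := mul_comm _ _
  linarith

end Cross

/-- For positive reals `φ¹,…,φ^{n−1}` and points
`(xᵢ,yᵢ) ∈ ℝ≥0²` with strictly increasing polar angle
(`xᵢyⱼ − xⱼyᵢ > 0` for `i < j`), at least one of
`Σ_{i<j} φⁱφʲ(xᵢ−xⱼ) > 0` or `Σ_{i<j} φⁱφʲ(yⱼ−yᵢ) > 0` holds. -/
theorem inward_direction_exists (n : ℕ) (hn : 3 ≤ n)
    (φ : Fin (n - 1) → ℝ) (hφ : ∀ i, 0 < φ i)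
    (x y : Fin (n - 1) → ℝ) (hx : ∀ i, 0 ≤ x i) (hy : ∀ i, 0 ≤ y i)
    (hangle : ∀ i j : Fin (n - 1), i < j → 0 < x i * y j - x j * y i) :
    (0 < ∑ i, ∑ j ∈ Finset.Ioi i, φ i * φ j * (x i - x j)) ∨
    (0 < ∑ i, ∑ j ∈ Finset.Ioi i, φ i * φ j * (y j - y i)) := by
  have hy_sum : ∑ i, ∑ j ∈ Ioi i, φ i * φ j * (y j - y i) =
      -∑ i, ∑ j ∈ Ioi i, φ i * φ j * (y i - y j) := by
    simp only [← sum_neg_distrib, ← mul_neg, neg_sub]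
  rw [hy_sum, neg_pos, sum_sum_Ioi_mul_sub, sum_sum_Ioi_mul_sub]
  let i₀ : Fin (n - 1) := ⟨0, by omega⟩
  let j₀ : Fin (n - 1) := ⟨n - 2, by omega⟩
  have hij : i₀ < j₀ := Fin.mk_lt_mk.mpr (by omega)
  have hmin : IsMin i₀ := fun k _ => Fin.mk_le_mk.mpr (Nat.zero_le _)
  have hmax : IsMax j₀ := fun k _ => Fin.mk_le_mk.mpr (by omega)
  have hw_pos : ∀ i, 0 < φ i * balance φ i ↔ 0 < balance φ i := fun i =>
    mul_pos_iff_of_pos_left (hφ i)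
  have hw_neg : ∀ i, φ i * balance φ i < 0 ↔ balance φ i < 0 := fun i => by
    simp only [← neg_pos, ← mul_neg, mul_pos_iff_of_pos_left (hφ i)]
  refine zero_lt_sum_mul_or_sum_mul_neg hx hy (fun i j hi hj => hangle i j ?_)
    ((hw_pos i₀).mpr (balance_pos_of_isMin hφ hmin hij))
    ((hw_neg j₀).mpr (balance_neg_of_isMax hφ hmax hij))
  exact (balance_antitone fun k => (hφ k).le).reflect_lt
    (((hw_neg j).mp hj).trans ((hw_pos i).mp hi))
end

section
/- Let b, v₁,…,vₙ ∈ ℝ³ (indices mod n), and assume all the quantities ⟨b,vᵢ,vᵢ₊₁⟩ := det(b,vᵢ,vᵢ₊₁) are nonzero. Define Bᵢ,ᵢ = −det(b,vᵢ₋₁,vᵢ₊₁)/(det(b,vᵢ₋₁,vᵢ)·det(b,vᵢ,vᵢ₊₁)) and Bᵢ,ᵢ₊₁ = 1/det(b,vᵢ,vᵢ₊₁), with B₁,₀ := −B₁,ₙ and Bₙ,ₙ₊₁ := −Bₙ,₁. Then for each i: B_{i,i−1}·vᵢ₋₁ + B_{i,i}·vᵢ + B_{i,i+1}·vᵢ₊₁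 = [det(vᵢ₋₁,vᵢ,vᵢ₊₁)/(det(b,vᵢ₋₁,vᵢ)·det(b,vᵢ,vᵢ₊₁))] · b. -/
theorem det3_smul_sub_det3_smul_add_det3_smul (b x y z : Fin 3 → ℝ) :
    det3 b y z • x - det3 b x z • y + det3 b x y • z = det3 x y z • b := by
  ext j
  fin_cases j <;> simp [det3, Matrix.det_fin_three] <;> ring

theorem det3_three_term_relation {b x y z : Fin 3 → ℝ}
    (hxy : det3 b x y ≠ 0) (hyz : det3 b y z ≠ 0) :
    (1 / det3 b x y) • x + (-(det3 b x z) / (det3 b x y * det3 b y z)) • y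
        + (1 / det3 b y z) • z
      = (det3 x y z / (det3 b x y * det3 b y z)) • b := by
  calc _ = (det3 b x y * det3 b y z)⁻¹
          • (det3 b y z • x - det3 b x z • y + det3 b x y • z) := by
        match_scalars <;> field_simp
    _ = _ := by rw [det3_smul_sub_det3_smul_add_det3_smul, smul_smul, inv_mul_eq_div]

/-- With cyclic indices (so that `v₀ = vₙ`, `vₙ₊₁ = v₁`, which
also encodes the sign conventions `B₁,₀ = −B₁,ₙ`, `Bₙ,ₙ₊₁ = −Bₙ,₁`), the
tridiagonal coefficients `B_{i,i−1} = 1/det(b,vᵢ₋₁,vᵢ)`,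
`B_{i,i} = −det(b,vᵢ₋₁,vᵢ₊₁)/(det(b,vᵢ₋₁,vᵢ)·det(b,vᵢ,vᵢ₊₁))`,
`B_{i,i+1} = 1/det(b,vᵢ,vᵢ₊₁)` satisfy
`B_{i,i−1}vᵢ₋₁ + B_{i,i}vᵢ + B_{i,i+1}vᵢ₊₁
  = (det(vᵢ₋₁,vᵢ,vᵢ₊₁)/(det(b,vᵢ₋₁,vᵢ)·det(b,vᵢ,vᵢ₊₁))) · b`. -/
theorem tridiagonal_identity (n : ℕ) [NeZero n]
    (b : Fin 3 → ℝ) (v : Fin n → (Fin 3 → ℝ))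
    (hden : ∀ i : Fin n, det3 b (v i) (v (i + 1)) ≠ 0) :
    ∀ i : Fin n,
      (1 / det3 b (v (i - 1)) (v i)) • v (i - 1)
        + (-(det3 b (v (i - 1)) (v (i + 1)))
            / (det3 b (v (i - 1)) (v i) * det3 b (v i) (v (i + 1)))) • v i
        + (1 / det3 b (v i) (v (i + 1))) • v (i + 1)
      = (det3 (v (i - 1)) (v i) (v (i + 1))
          / (det3 b (v (i - 1)) (v i) * det3 b (v i) (v (i + 1)))) • b := by
  intro i
  have hprev : det3 b (v (i - 1)) (v i) ≠ 0 := by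
    simpa only [sub_add_cancel] using hden (i - 1)
  exact det3_three_term_relation hprev (hden i)
end

section
/- Let b, v₁,…,vₙ ∈ ℝ³ with indices mod n. Let A be the n×n symmetric matrix A_{ij} = (1/2)det(b,vᵢ,vⱼ) for i ≤ j (and A_{ji} = A_{ij}), and let B be the symmetric matrix with B_{ii} = −det(b,vᵢ₋₁,vᵢ₊₁)/(det(b,vᵢ₋₁,vᵢ)det(b,vᵢ,vᵢ₊₁)), B_{i,i+1} = 1/det(b,vᵢ,vᵢ₊₁), B_{1,n} = 1/det(b,v₁,vₙ), and all other entries zero. Assume all denominators are nonzero. Then B·A = I, i.e., A and B are mutually inverse. -/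
theorem det3_swap (b x y : Fin 3 → ℝ) : det3 b y x = -det3 b x y := by
  simp only [det3, Matrix.det_fin_three, Matrix.of_apply, Matrix.cons_val, Matrix.cons_val_zero,
    Matrix.cons_val_one]
  ring

theorem det3_plucker (b w x y z : Fin 3 → ℝ) :
    det3 b w x * det3 b y z - det3 b w y * det3 b x z + det3 b w z * det3 b x y = 0 := by
  simp only [det3, Matrix.det_fin_three, Matrix.of_apply, Matrix.cons_val, Matrix.cons_val_zero,
    Matrix.cons_val_one]
  ring

namespace Fin

variable {n : ℕ} [NeZero n]

theorem val_add_one_eq_ite (i : Fin n) :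
    ((i + 1 : Fin n) : ℕ) = if (i : ℕ) + 1 = n then 0 else (i : ℕ) + 1 := by
  have := i.isLt
  rw [Fin.val_add, Fin.val_one', Nat.add_mod_mod]
  split_ifs with h
  · rw [h, Nat.mod_self]
  · exact Nat.mod_eq_of_lt (by omega)

theorem eq_add_one_iff {i j : Fin n} :
    j = i + 1 ↔ (j : ℕ) = i + 1 ∨ ((j : ℕ) = 0 ∧ (i : ℕ) = n - 1) := by
  have := i.isLt
  rw [Fin.ext_iff, val_add_one_eq_ite]
  split_ifs <;> omega

theorem add_one_ne_self (hn : 2 ≤ n) (i : Fin n) : i + 1 ≠ i := by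
  rw [Ne, Fin.ext_iff, val_add_one_eq_ite]
  split_ifs <;> omega

theorem sub_one_ne_self (hn : 2 ≤ n) (i : Fin n) : i - 1 ≠ i := fun h =>
  add_one_ne_self hn (i - 1) (by rw [sub_add_cancel, h])

theorem sub_one_ne_add_one (hn : 3 ≤ n) (i : Fin n) : i - 1 ≠ i + 1 := by
  intro h
  have := (i - 1).isLt
  have h' : i - 1 = i - 1 + 1 + 1 := by rw [sub_add_cancel, h]
  rw [Fin.ext_iff, val_add_one_eq_ite, val_add_one_eq_ite] at h'
  split_ifs at h' <;> omega

end Fin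

variable {n : ℕ}

noncomputable def cmpSign (i j : Fin n) : ℝ := if i ≤ j then 1 else -1

theorem cmpSign_mul_self (i j : Fin n) : cmpSign i j * cmpSign i j = 1 := by
  unfold cmpSign; split_ifs <;> norm_num

theorem cmpSign_swap {i j : Fin n} (h : i ≠ j) : cmpSign j i = -cmpSign i j := by
  have : (i : ℕ) ≠ j := Fin.val_ne_of_ne h
  unfold cmpSign
  simp only [Fin.le_def]
  split_ifs <;> norm_num <;> omega

theorem cmpSign_add_one_mul [NeZero n] {i k : Fin n} (hki : k ≠ i) (hk : k ≠ i + 1) :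
    cmpSign i (i + 1) * cmpSign i k = cmpSign (i + 1) k := by
  have := Fin.val_ne_of_ne hki
  have := Fin.val_ne_of_ne hk
  have := i.isLt
  unfold cmpSign
  simp only [Fin.le_def, Fin.val_add_one_eq_ite] at *
  split_ifs at * <;> norm_num <;> omega

theorem cmpSign_add_one_mul' [NeZero n] {i k : Fin n} (hki : k ≠ i) (hk : k ≠ i + 1) :
    cmpSign i (i + 1) * cmpSign (i + 1) k = cmpSign i k := by
  rw [← cmpSign_add_one_mul hki hk, ← mul_assoc, cmpSign_mul_self, one_mul]

theorem Matrix.mul_apply_eq_add_add {ι R : Type*} [Fintype ι] [DecidableEq ι]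
    [NonUnitalNonAssocSemiring R] (M N : Matrix ι ι R) {i a b c : ι} (k : ι)
    (hab : a ≠ b) (hac : a ≠ c) (hbc : b ≠ c) (hM : ∀ j, j ≠ a → j ≠ b → j ≠ c → M i j = 0) :
    (M * N) i k = M i a * N a k + M i b * N b k + M i c * N c k := by
  rw [Matrix.mul_apply, ← Finset.sum_subset (Finset.subset_univ {a, b, c})]
  · rw [Finset.sum_insert (by simp [hab, hac]), Finset.sum_pair hbc, add_assoc]
  · intro j _ hj
    simp only [Finset.mem_insert, Finset.mem_singleton, not_or] at hj
    rw [hM j hj.1 hj.2.1 hj.2.2, zero_mul]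

section CyclicInverse

variable (D : Fin n → Fin n → ℝ)

noncomputable def signedHalfMatrix : Matrix (Fin n) (Fin n) ℝ :=
  Matrix.of fun i j => cmpSign i j * D i j / 2

noncomputable def cyclicTridiagMatrix [NeZero n] : Matrix (Fin n) (Fin n) ℝ :=
  Matrix.of fun i j =>
    if i = j then -D (i - 1) (i + 1) / (D (i - 1) i * D i (i + 1))
    else if j = i + 1 ∨ i = j + 1 then cmpSign i j / D i j
    else 0

variable {D}

theorem signedHalfMatrix_apply_eq_ite (hanti : ∀ i j, D j i = -D i j) (i j : Fin n) :
    signedHalfMatrix D i j = if i ≤ j then 1 / 2 * D i j else 1 / 2 * D j i := by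
  rw [signedHalfMatrix, Matrix.of_apply, cmpSign, hanti i j]
  split_ifs <;> ring

variable [NeZero n]

theorem cyclicTridiagMatrix_apply_eq_ite (hanti : ∀ i j, D j i = -D i j) (i j : Fin n) :
    cyclicTridiagMatrix D i j =
      if i = j then -D (i - 1) (i + 1) / (D (i - 1) i * D i (i + 1))
      else if (j : ℕ) = (i : ℕ) + 1 ∨ ((i : ℕ) = 0 ∧ (j : ℕ) = n - 1) then 1 / D i j
      else if (i : ℕ) = (j : ℕ) + 1 ∨ ((j : ℕ) = 0 ∧ (i : ℕ) = n - 1) then 1 / D j i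
      else 0 := by
  have := i.isLt
  have := j.isLt
  simp only [cyclicTridiagMatrix, Matrix.of_apply, Fin.eq_add_one_iff, cmpSign, Fin.le_def,
    hanti i j]
  split_ifs <;> first | rfl | (rw [div_neg, neg_div]) | omega

theorem cyclicTridiagMatrix_apply_add_one (hn : 3 ≤ n) (i : Fin n) :
    cyclicTridiagMatrix D i (i + 1) = cmpSign i (i + 1) / D i (i + 1) := by
  rw [cyclicTridiagMatrix, Matrix.of_apply, if_neg (Fin.add_one_ne_self (by omega) i).symm,
    if_pos (Or.inl rfl)]

theorem cyclicTridiagMatrix_apply_sub_one (hn : 3 ≤ n) (hanti : ∀ i j, D j i = -D i j)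
    (i : Fin n) : cyclicTridiagMatrix D i (i - 1) = cmpSign (i - 1) i / D (i - 1) i := by
  have hne := Fin.sub_one_ne_self (by omega) i
  rw [cyclicTridiagMatrix, Matrix.of_apply, if_neg hne.symm,
    if_pos (Or.inr (sub_add_cancel i 1).symm), cmpSign_swap hne, hanti, neg_div_neg_eq]

theorem cyclicTridiagMatrix_apply_of_ne (i j : Fin n) (h₁ : j ≠ i - 1) (h₂ : j ≠ i)
    (h₃ : j ≠ i + 1) : cyclicTridiagMatrix D i j = 0 := by
  rw [cyclicTridiagMatrix, Matrix.of_apply, if_neg (Ne.symm h₂), if_neg]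
  rintro (h | h)
  exacts [h₃ h, h₁ (eq_sub_of_add_eq h.symm)]

theorem cyclicTridiagMatrix_mul_apply (hn : 3 ≤ n) (hanti : ∀ i j, D j i = -D i j)
    (M : Matrix (Fin n) (Fin n) ℝ) (i k : Fin n) :
    (cyclicTridiagMatrix D * M) i k =
      cmpSign (i - 1) i / D (i - 1) i * M (i - 1) k
        + -D (i - 1) (i + 1) / (D (i - 1) i * D i (i + 1)) * M i k
        + cmpSign i (i + 1) / D i (i + 1) * M (i + 1) k := by
  have hne := Fin.sub_one_ne_self (by omega) i
  rw [Matrix.mul_apply_eq_add_add _ _ k hne (Fin.sub_one_ne_add_one hn i)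
      (Fin.add_one_ne_self (by omega) i).symm (cyclicTridiagMatrix_apply_of_ne i),
    cyclicTridiagMatrix_apply_sub_one hn hanti, cyclicTridiagMatrix_apply_add_one hn]
  simp only [cyclicTridiagMatrix, Matrix.of_apply, if_pos]

theorem cyclicTridiagMatrix_mul_signedHalfMatrix (hn : 3 ≤ n) (hanti : ∀ i j, D j i = -D i j)
    (hplucker : ∀ w x y z, D w x * D y z - D w y * D x z + D w z * D x y = 0)
    (hD : ∀ i, D i (i + 1) ≠ 0) :
    cyclicTridiagMatrix D * signedHalfMatrix D = 1 := by
  ext i k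
  rw [cyclicTridiagMatrix_mul_apply hn hanti, Matrix.one_apply]
  simp only [signedHalfMatrix, Matrix.of_apply]
  set p := i - 1
  set q := i + 1
  have hp : p + 1 = i := sub_add_cancel i 1
  have hD₁ : D p i ≠ 0 := hp ▸ hD p
  have hD₂ : D i q ≠ 0 := hD i
  have hdiag : ∀ j, D j j = 0 := fun j => by linarith [hanti j j]
  rcases eq_or_ne i k with rfl | hik
  · rw [if_pos rfl, hdiag, hanti i q, cmpSign_swap (Fin.add_one_ne_self (by omega) i).symm]
    field_simp
    linear_combination (D p i * D i q) * (cmpSign_mul_self p i + cmpSign_mul_self i q)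
  · have hk : k ≠ i := hik.symm
    have h₁ : cmpSign p i * cmpSign p k * D p k = cmpSign i k * D p k := by
      rcases eq_or_ne k p with rfl | hkp
      · simp [hdiag]
      · rw [← hp, cmpSign_add_one_mul hkp (hp ▸ hk)]
    have h₃ : cmpSign i q * cmpSign q k * D q k = cmpSign i k * D q k := by
      rcases eq_or_ne k q with rfl | hkq
      · simp [hdiag]
      · rw [cmpSign_add_one_mul' hk hkq]
    rw [if_neg hik]
    field_simp
    linear_combination D i q * h₁ + D p i * h₃ + cmpSign i k * hplucker p i q k

end CyclicInverse

/-- The symmetric matrix `A_{ij} = (1/2)det(b,vᵢ,vⱼ)` (for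
`i ≤ j`) and the symmetric almost-tridiagonal matrix `B` with
`B_{ii} = −det(b,vᵢ₋₁,vᵢ₊₁)/(det(b,vᵢ₋₁,vᵢ)det(b,vᵢ,vᵢ₊₁))` (cyclic indices),
`B_{i,i+1} = 1/det(b,vᵢ,vᵢ₊₁)`, `B_{1,n} = 1/det(b,v₁,vₙ)`, other entries
zero, are mutually inverse: `B·A = I` and `A·B = I`. -/
theorem BA_eq_one (n : ℕ) [NeZero n] (hn : 3 ≤ n)
    (b : Fin 3 → ℝ) (v : Fin n → (Fin 3 → ℝ))
    (hden : ∀ i : Fin n, det3 b (v i) (v (i + 1)) ≠ 0)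
    (A B : Matrix (Fin n) (Fin n) ℝ)
    (hA : ∀ i j : Fin n, A i j =
      if i ≤ j then (1 / 2) * det3 b (v i) (v j)
      else (1 / 2) * det3 b (v j) (v i))
    (hB : ∀ i j : Fin n, B i j =
      if i = j then
        -(det3 b (v (i - 1)) (v (i + 1)))
          / (det3 b (v (i - 1)) (v i) * det3 b (v i) (v (i + 1)))
      else if (j : ℕ) = (i : ℕ) + 1 ∨ ((i : ℕ) = 0 ∧ (j : ℕ) = n - 1) then
        1 / det3 b (v i) (v j)
      else if (i : ℕ) = (j : ℕ) + 1 ∨ ((j : ℕ) = 0 ∧ (i : ℕ) = n - 1) then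
        1 / det3 b (v j) (v i)
      else 0) :
    B * A = 1 ∧ A * B = 1 := by
  let D : Fin n → Fin n → ℝ := fun i j => det3 b (v i) (v j)
  have hanti : ∀ i j, D j i = -D i j := fun i j => det3_swap b (v i) (v j)
  have hA' : A = signedHalfMatrix D :=
    Matrix.ext fun i j => (hA i j).trans (signedHalfMatrix_apply_eq_ite hanti i j).symm
  have hB' : B = cyclicTridiagMatrix D :=
    Matrix.ext fun i j => (hB i j).trans (cyclicTridiagMatrix_apply_eq_ite hanti i j).symm
  have hBA : B * A = 1 := by
    rw [hA', hB']
    exact cyclicTridiagMatrix_mul_signedHalfMatrix hn hanti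
      (fun w x y z => det3_plucker b (v w) (v x) (v y) (v z)) hden
  exact ⟨hBA, mul_eq_one_comm.mp hBA⟩
end
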